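/- arXiv:1203.3025 — 3 statements merged into one kernel-verified Lean document; each statement's English description precedes it below -/
import Mathlib

section
/- Let H be a complex Hilbert space and let T : H → H be a bounded linear operator that satisfies a Gårding inequality and is injective. Let (V_N)_{N∈ℕ} be a nondecreasing sequence of finite-dimensional subspaces of H whose union is dense in H. Then there exist N₀ ∈ ℕ and a constant C > 0 such that for every N ≥ N₀ and every f ∈ H the Galerkin problem — find u_N ∈ V_N with ⟨T u_N, w⟩ = ⟨f, w⟩ for all w ∈ V_N — has a unique solution u_N ∈ V_N, and this solution satisfies the quasi-optimal error estimate ‖u_N − u‖ ≤ C · inf_{w ∈ V_N} ‖w − u‖, where u ∈ H is the unique solution of T u = f. -/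
/-!
Adding the compact perturbation `K` of the Gårding inequality gives a coercive operator
`S = T + K`, which is onto and whose Galerkin approximations converge. Writing `P_N` for the
orthogonal projection onto `V_N`, a compactness argument shows that `P_N T` is bounded below on
`V_N` uniformly in large `N`: otherwise unit vectors `v_n ∈ V_{N_n}` with `P_{N_n} T v_n → 0`
would, along a subsequence on which `K v_n` converges, converge to a unit vector in the kernel
of `T`. This discrete inf-sup condition makes the square Galerkin systems uniquely solvable and
yields quasi-optimality by the Céa–Babuška argument.
-/

open Metric Filter Topology
open scoped InnerProductSpace

section Galerkin

variable {H : Type*} [NormedAddCommGroup H] [InnerProductSpace ℂ H]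

theorem tendsto_infDist_of_monotone_of_dense {X ι : Type*} [PseudoMetricSpace X] [Preorder ι]
    {s : ι → Set X} (hs : Monotone s) (hd : Dense (⋃ i, s i)) (x : X) :
    Tendsto (fun i ↦ infDist x (s i)) atTop (𝓝 0) := by
  refine tendsto_order.2 ⟨fun a ha ↦ .of_forall fun i ↦ ha.trans_le infDist_nonneg,
    fun ε hε ↦ ?_⟩
  obtain ⟨y, hy, hxy⟩ := Metric.mem_closure_iff.1 (hd x) ε hε
  obtain ⟨i, hyi⟩ := Set.mem_iUnion.1 hy
  filter_upwards [eventually_ge_atTop i] with j hij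
  exact (infDist_le_dist_of_mem (hs hij hyi)).trans_lt hxy

namespace Submodule

variable (W : Submodule ℂ H) [W.HasOrthogonalProjection]

theorem norm_sub_starProjection_eq_infDist (u : H) :
    ‖u - W.starProjection u‖ = infDist u W := by
  simp only [starProjection_minimal, infDist_eq_iInf, dist_eq_norm]
  rfl

theorem starProjection_eq_starProjection_iff {x f : H} :
    W.starProjection x = W.starProjection f ↔ ∀ w ∈ W, ⟪x, w⟫_ℂ = ⟪f, w⟫_ℂ := by
  rw [← sub_eq_zero, ← map_sub, starProjection_apply_eq_zero_iff, mem_orthogonal']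
  simp only [inner_sub_left, sub_eq_zero]

end Submodule

section Coercive

variable {S : H →L[ℂ] H}

theorem norm_le_of_coercive (hS : ∀ v, ‖v‖ ^ 2 ≤ (⟪S v, v⟫_ℂ).re) {v g : H}
    (h : ⟪S v, v⟫_ℂ = ⟪g, v⟫_ℂ) : ‖v‖ ≤ ‖g‖ := by
  have hv : ‖v‖ ^ 2 ≤ ‖g‖ * ‖v‖ :=
    (h ▸ hS v).trans <| (Complex.re_le_norm _).trans (norm_inner_le_norm g v)
  nlinarith [norm_nonneg v, norm_nonneg g]

theorem norm_le_norm_apply_of_coercive (hS : ∀ v, ‖v‖ ^ 2 ≤ (⟪S v, v⟫_ℂ).re) (v : H) :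
    ‖v‖ ≤ ‖S v‖ :=
  norm_le_of_coercive hS rfl

theorem norm_le_norm_starProjection_of_coercive (hS : ∀ v, ‖v‖ ^ 2 ≤ (⟪S v, v⟫_ℂ).re)
    (W : Submodule ℂ H) [W.HasOrthogonalProjection] {v : H} (hv : v ∈ W) :
    ‖v‖ ≤ ‖W.starProjection (S v)‖ :=
  norm_le_of_coercive hS <| by
    rw [Submodule.inner_starProjection_left_eq_right, W.starProjection_eq_self_iff.2 hv]

theorem surjective_of_coercive [CompleteSpace H] (hS : ∀ v, ‖v‖ ^ 2 ≤ (⟪S v, v⟫_ℂ).re) :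
    Function.Surjective S := by
  set R : Submodule ℂ H := LinearMap.range (S : H →ₗ[ℂ] H)
  have hclosed : IsClosed (R : Set H) := by
    rw [LinearMap.coe_range]
    exact (S.antilipschitz_of_bound (K := 1) fun v ↦ by
      simpa using norm_le_norm_apply_of_coercive hS v).isClosed_range S.uniformContinuous
  have : CompleteSpace R := hclosed.completeSpace_coe
  have hbot : Rᗮ = ⊥ := by
    refine (Submodule.eq_bot_iff _).2 fun w hw ↦ norm_eq_zero.1 <| le_antisymm ?_ (norm_nonneg w)
    simpa using norm_le_of_coercive hS (g := 0) <|
      by rw [inner_zero_left]; exact (Submodule.mem_orthogonal _ w).1 hw _ ⟨w, rfl⟩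
  exact LinearMap.range_eq_top.1 (Submodule.orthogonal_eq_bot_iff.1 hbot)

end Coercive

theorem mul_norm_sub_le_of_stable (T : H →L[ℂ] H) (W : Submodule ℂ H)
    [W.HasOrthogonalProjection] {c : ℝ} (hc : 0 ≤ c)
    (hT : ∀ v ∈ W, c * ‖v‖ ≤ ‖W.starProjection (T v)‖) {v : H} (hv : v ∈ W) (u : H) :
    c * ‖v - u‖ ≤ ‖W.starProjection (T v - T u)‖ + (c + ‖T‖) * infDist u W := by
  set x := W.starProjection u
  have hx : ‖u - x‖ = infDist u W := W.norm_sub_starProjection_eq_infDist u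
  have hvx : c * ‖v - x‖ ≤ ‖W.starProjection (T v - T u)‖ + ‖T‖ * ‖u - x‖ :=
    calc c * ‖v - x‖ ≤ ‖W.starProjection (T (v - x))‖ :=
          hT _ (W.sub_mem hv (W.starProjection_apply_mem u))
      _ = ‖W.starProjection (T v - T u) + W.starProjection (T (u - x))‖ := by
          rw [← map_add, ← map_sub, ← map_add, sub_add_sub_cancel]
      _ ≤ ‖W.starProjection (T v - T u)‖ + ‖W.starProjection (T (u - x))‖ := norm_add_le _ _
      _ ≤ ‖W.starProjection (T v - T u)‖ + ‖T‖ * ‖u - x‖ := by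
          gcongr
          exact (W.norm_starProjection_apply_le _).trans (T.le_opNorm _)
  calc c * ‖v - u‖ ≤ c * ‖v - x‖ + c * ‖u - x‖ := by
        rw [← mul_add, norm_sub_rev u x]
        exact mul_le_mul_of_nonneg_left (norm_sub_le_norm_sub_add_norm_sub _ _ _) hc
    _ ≤ _ := by rw [← hx]; linarith

theorem mul_norm_le_of_forall_norm_eq_one {𝕜 E F : Type*} [RCLike 𝕜] [NormedAddCommGroup E]
    [NormedSpace 𝕜 E] [NormedAddCommGroup F] [NormedSpace 𝕜 F] (L : E →ₗ[𝕜] F)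
    (W : Submodule 𝕜 E) {c : ℝ} (h : ∀ v ∈ W, ‖v‖ = 1 → c ≤ ‖L v‖) {v : E} (hv : v ∈ W) :
    c * ‖v‖ ≤ ‖L v‖ := by
  rcases eq_or_ne v 0 with rfl | hv0
  · simp
  have hpos : 0 < ‖v‖ := norm_pos_iff.2 hv0
  have hunit := h _ (W.smul_mem (‖v‖⁻¹ : 𝕜) hv) (norm_smul_inv_norm hv0)
  rw [map_smul, norm_smul, norm_inv, RCLike.norm_ofReal, abs_norm, le_inv_mul_iff₀ hpos] at hunit
  linarith

theorem tendsto_of_tendsto_starProjection_sub {α : Type*} {l : Filter α} {S : H →L[ℂ] H}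
    (hS : ∀ v, ‖v‖ ^ 2 ≤ (⟪S v, v⟫_ℂ).re) {V : ℕ → Submodule ℂ H}
    [∀ N, (V N).HasOrthogonalProjection] (hmono : Monotone V)
    (hdense : Dense (⋃ N, (V N : Set H))) {N : α → ℕ} (hN : Tendsto N l atTop) {v : α → H}
    (hv : ∀ n, v n ∈ V (N n)) {z : H}
    (h : Tendsto (fun n ↦ (V (N n)).starProjection (S (v n) - S z)) l (𝓝 0)) :
    Tendsto v l (𝓝 z) := by
  have hdist := (tendsto_infDist_of_monotone_of_dense (fun _ _ h ↦ hmono h) hdense z).comp hN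
  rw [tendsto_iff_norm_sub_tendsto_zero]
  refine squeeze_zero (fun n ↦ norm_nonneg _) (fun n ↦ ?_)
    (by simpa using h.norm.add (hdist.const_mul (1 + ‖S‖)))
  simpa using mul_norm_sub_le_of_stable S (V (N n)) zero_le_one
    (fun w hw ↦ by simpa using norm_le_norm_starProjection_of_coercive hS _ hw) (hv n) z

section Compact

variable [CompleteSpace H] {T K : H →L[ℂ] H} {V : ℕ → Submodule ℂ H}
  [∀ N, (V N).HasOrthogonalProjection]

theorem not_tendsto_starProjection_zero_of_norm_eq_one (hK : IsCompactOperator K)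
    (hTK : ∀ v, ‖v‖ ^ 2 ≤ (⟪(T + K) v, v⟫_ℂ).re) (hinj : Function.Injective T)
    (hmono : Monotone V) (hdense : Dense (⋃ N, (V N : Set H))) {N : ℕ → ℕ}
    (hN : Tendsto N atTop atTop) {v : ℕ → H} (hv : ∀ n, v n ∈ V (N n)) (hv1 : ∀ n, ‖v n‖ = 1) :
    ¬Tendsto (fun n ↦ (V (N n)).starProjection (T (v n))) atTop (𝓝 0) := by
  intro hTv
  obtain ⟨C, hC, hKC⟩ := hK.image_closedBall_subset_compact (f := (K : H →ₗ[ℂ] H)) 1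
  obtain ⟨y, -, φ, hφ, hKv⟩ := hC.tendsto_subseq fun n ↦ hKC ⟨v n, by simp [hv1], rfl⟩
  obtain ⟨z, rfl⟩ := surjective_of_coercive hTK y
  have hvz : Tendsto (v ∘ φ) atTop (𝓝 z) := by
    refine tendsto_of_tendsto_starProjection_sub hTK hmono hdense (hN.comp hφ.tendsto_atTop)
      (fun n ↦ hv (φ n)) ?_
    have hK0 : Tendsto (fun n ↦ (V (N (φ n))).starProjection (K (v (φ n)) - (T + K) z))
        atTop (𝓝 0) :=
      squeeze_zero_norm (fun n ↦ Submodule.norm_starProjection_apply_le _ _)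
        (tendsto_iff_norm_sub_tendsto_zero.1 hKv)
    simpa [add_sub_assoc] using (hTv.comp hφ.tendsto_atTop).add hK0
  have hKz : K z = (T + K) z := tendsto_nhds_unique ((K.continuous.tendsto z).comp hvz) hKv
  have hz : z = 0 := hinj (by simpa using hKz)
  have hz1 : ‖z‖ = 1 := tendsto_nhds_unique hvz.norm (by simp [hv1])
  simp [hz] at hz1

theorem exists_stable_of_garding (hK : IsCompactOperator K)
    (hTK : ∀ v, ‖v‖ ^ 2 ≤ (⟪(T + K) v, v⟫_ℂ).re) (hinj : Function.Injective T)
    (hmono : Monotone V) (hdense : Dense (⋃ N, (V N : Set H))) :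
    ∃ c > 0, ∃ N₀, ∀ N ≥ N₀, ∀ v ∈ V N, c * ‖v‖ ≤ ‖(V N).starProjection (T v)‖ := by
  suffices ∃ c > 0, ∃ N₀, ∀ N ≥ N₀, ∀ v ∈ V N, ‖v‖ = 1 → c ≤ ‖(V N).starProjection (T v)‖ by
    obtain ⟨c, hc, N₀, h⟩ := this
    exact ⟨c, hc, N₀, fun N hN v hv ↦ mul_norm_le_of_forall_norm_eq_one
      (((V N).starProjection ∘L T : H →L[ℂ] H) : H →ₗ[ℂ] H) (V N) (h N hN) hv⟩
  by_contra! h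
  choose N hN v hv hv1 hlt using fun n : ℕ ↦ h (1 / (n + 1)) (by positivity) n
  exact not_tendsto_starProjection_zero_of_norm_eq_one hK hTK hinj hmono hdense
    (tendsto_atTop_mono hN tendsto_id) hv hv1
    (squeeze_zero_norm (fun n ↦ (hlt n).le) tendsto_one_div_add_atTop_nhds_zero_nat)

end Compact

theorem existsUnique_starProjection_eq (T : H →L[ℂ] H) (W : Submodule ℂ H)
    [FiniteDimensional ℂ W] {c : ℝ} (hc : 0 < c)
    (hT : ∀ v ∈ W, c * ‖v‖ ≤ ‖W.starProjection (T v)‖) (f : H) :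
    ∃! v : W, W.starProjection (T v) = W.starProjection f := by
  let A : W →ₗ[ℂ] W := (W.orthogonalProjectionOnto ∘L T ∘L W.subtypeL : W →L[ℂ] W)
  have hA : ∀ (v : W) (g : H),
      A v = W.orthogonalProjectionOnto g ↔ W.starProjection (T v) = W.starProjection g :=
    fun _ _ ↦ Subtype.ext_iff
  have hAinj : Function.Injective A := by
    refine (injective_iff_map_eq_zero A).2 fun v hv ↦ ?_
    have hv' := hT v v.2
    rw [(hA v 0).1 (by simpa using hv), map_zero, norm_zero] at hv'
    exact norm_eq_zero.1 (le_antisymm (nonpos_of_mul_nonpos_right hv' hc) (norm_nonneg _))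
  obtain ⟨v, hv⟩ := LinearMap.injective_iff_surjective.1 hAinj (W.orthogonalProjectionOnto f)
  exact ⟨v, (hA v f).1 hv, fun v' hv' ↦ hAinj (((hA v' f).2 hv').trans hv.symm)⟩

end Galerkin

/-- Abstract quasi-optimal convergence of Galerkin discretizations for a bounded
linear operator on a complex Hilbert space satisfying a Gårding inequality. -/
theorem galerkin_quasi_optimal
    {H : Type*} [NormedAddCommGroup H] [InnerProductSpace ℂ H] [CompleteSpace H]
    (T : H →L[ℂ] H)
    (hGarding : ∃ K : H →L[ℂ] H, IsCompactOperator (⇑K) ∧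
      ∀ v : H, ((inner ℂ (T v) v : ℂ)).re ≥ ‖v‖ ^ 2 - ((inner ℂ (K v) v : ℂ)).re)
    (hinj : Function.Injective (⇑T))
    (V : ℕ → Submodule ℂ H)
    (hfd : ∀ N, FiniteDimensional ℂ (V N))
    (hmono : Monotone V)
    (hdense : Dense (⋃ N, (V N : Set H))) :
    ∃ (N₀ : ℕ) (C : ℝ), 0 < C ∧ ∀ N, N₀ ≤ N → ∀ f : H,
      (∃! uN : V N, ∀ w ∈ V N, (inner ℂ (T (uN : H)) w : ℂ) = inner ℂ f w) ∧
      ∀ (u : H) (uN : V N), T u = f →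
        (∀ w ∈ V N, (inner ℂ (T (uN : H)) w : ℂ) = inner ℂ f w) →
        ‖(uN : H) - u‖ ≤ C * Metric.infDist u (V N : Set H) := by
  obtain ⟨K, hK, hG⟩ := hGarding
  have hTK : ∀ v, ‖v‖ ^ 2 ≤ (⟪(T + K) v, v⟫_ℂ).re := fun v ↦ by
    rw [add_apply, inner_add_left, Complex.add_re]
    linarith [hG v]
  have := hfd
  obtain ⟨c, hc, N₀, hstab⟩ := exists_stable_of_garding hK hTK hinj hmono hdense
  refine ⟨N₀, (c + ‖T‖) / c, by positivity, fun N hN f ↦ ⟨?_, fun u uN hu hgal ↦ ?_⟩⟩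
  · simpa only [Submodule.starProjection_eq_starProjection_iff] using
      existsUnique_starProjection_eq T (V N) hc (hstab N hN) f
  · have hP : (V N).starProjection (T uN - T u) = 0 := by
      rw [map_sub, sub_eq_zero, hu, Submodule.starProjection_eq_starProjection_iff]
      exact hgal
    have hcea := mul_norm_sub_le_of_stable T (V N) hc.le (hstab N hN) uN.2 u
    rw [hP, norm_zero, zero_add] at hcea
    rw [div_mul_eq_mul_div, le_div_iff₀ hc]
    linarith
end

section
/- Let k > 0, α ∈ ℝ, ρ > 0 and assume the non-resonance condition holds. For j = (j₁,j₂) ∈ ℤ² define K̂_ρ(j) = (4πρ)^{−1/2} · (cos(j₂π)·exp(iβ_{j₁}ρ) − 1)/(k² − α_{j₁}² − (j₂π/ρ)²) whenever k² ≠ α_{j₁}² + (j₂π/ρ)², and K̂_ρ(j) = (i/(4 j₂))·(ρ/π)^{3/2} otherwise (note that in this second case j₂ ≠ 0 by the non-resonance condition, so K̂_ρ(j) is well defined). Then sup_{j∈ℤ²} (1 + j₁² + j₂²)·|K̂_ρ(j)| < ∞. -/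
open Real

/-- `α_j = j + α`. -/
noncomputable def alphaCoef (α : ℝ) (j : ℤ) : ℝ := (j : ℝ) + α

/-- `β_j = (k² − α_j²)^{1/2}` if `k² ≥ α_j²` and `β_j = i(α_j² − k²)^{1/2}` otherwise,
so that `Im β_j ≥ 0`. -/
noncomputable def betaCoef (k α : ℝ) (j : ℤ) : ℂ :=
  if k ^ 2 ≥ (alphaCoef α j) ^ 2 then
    ((Real.sqrt (k ^ 2 - (alphaCoef α j) ^ 2) : ℝ) : ℂ)
  else Complex.I * ((Real.sqrt ((alphaCoef α j) ^ 2 - k ^ 2) : ℝ) : ℂ)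

/-- The Fourier coefficients `K̂_ρ(j)` of the periodized quasi-periodic Green's function. -/
noncomputable def KhatRho (k α ρ : ℝ) (j : ℤ × ℤ) : ℂ :=
  if k ^ 2 ≠ (alphaCoef α j.1) ^ 2 + ((j.2 : ℝ) * π / ρ) ^ 2 then
    (((1 : ℝ) / Real.sqrt (4 * π * ρ) : ℝ) : ℂ) *
      (((Real.cos ((j.2 : ℝ) * π) : ℝ) : ℂ) *
          Complex.exp (Complex.I * betaCoef k α j.1 * (ρ : ℂ)) - 1) /
      (((k ^ 2 - (alphaCoef α j.1) ^ 2 - ((j.2 : ℝ) * π / ρ) ^ 2 : ℝ)) : ℂ)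
  else
    Complex.I / (4 * (j.2 : ℂ)) * (((ρ / π) ^ ((3 : ℝ) / 2) : ℝ) : ℂ)

open Filter

/-!
Off a finite set of indices the resonance denominator
`α_{j₁}² + (j₂π/ρ)² − k²` is positive and comparable to `1 + j₁² + j₂²`, since
`α_{j₁}² ≥ j₁²/2 − α²`; the numerator `cos(j₂π) e^{iβρ} − 1` has modulus at most `2`
because `Im β ≥ 0`. So `(1 + |j|²) ‖K̂_ρ(j)‖` is bounded off a finite set, hence bounded.
-/

lemma tendsto_intCast_sq_add_sq_cofinite :
    Tendsto (fun j : ℤ × ℤ => (j.1 : ℝ) ^ 2 + (j.2 : ℝ) ^ 2) cofinite atTop := by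
  have hnorm : Tendsto (fun j : ℤ × ℤ => ‖j‖ ^ 2) cofinite atTop := by
    rw [← cocompact_eq_cofinite]
    exact (tendsto_pow_atTop two_ne_zero).comp tendsto_norm_cocompact_atTop
  refine tendsto_atTop_mono (fun j => ?_) hnorm
  rw [Prod.norm_def, Int.norm_eq_abs, Int.norm_eq_abs]
  rcases le_total |(j.1 : ℝ)| |(j.2 : ℝ)| with h | h
  · rw [max_eq_right h, sq_abs]; nlinarith
  · rw [max_eq_left h, sq_abs]; nlinarith

lemma betaCoef_im_nonneg (k α : ℝ) (j : ℤ) : 0 ≤ (betaCoef k α j).im := by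
  unfold betaCoef
  split_ifs <;> simp [Real.sqrt_nonneg]

lemma norm_exp_I_mul_mul_ofReal_le_one {b : ℂ} (hb : 0 ≤ b.im) {ρ : ℝ} (hρ : 0 ≤ ρ) :
    ‖Complex.exp (Complex.I * b * ρ)‖ ≤ 1 := by
  rw [Complex.norm_exp, Real.exp_le_one_iff]
  simpa [Complex.mul_re] using mul_nonneg hb hρ

lemma norm_cos_mul_sub_one_le_two (x : ℝ) {z : ℂ} (hz : ‖z‖ ≤ 1) :
    ‖(Real.cos x : ℂ) * z - 1‖ ≤ 2 :=
  calc ‖(Real.cos x : ℂ) * z - 1‖ ≤ ‖(Real.cos x : ℂ)‖ * ‖z‖ + ‖(1 : ℂ)‖ :=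
        (norm_sub_le _ _).trans_eq (by rw [norm_mul])
    _ ≤ 1 * 1 + 1 := by
        rw [norm_one, Complex.norm_real, Real.norm_eq_abs]
        gcongr
        exact Real.abs_cos_le_one x
    _ = 2 := by norm_num

lemma norm_KhatRho_le (k α : ℝ) {ρ : ℝ} (hρ : 0 ≤ ρ) {j : ℤ × ℤ}
    (hj : k ^ 2 < alphaCoef α j.1 ^ 2 + ((j.2 : ℝ) * π / ρ) ^ 2) :
    ‖KhatRho k α ρ j‖ ≤
      2 / Real.sqrt (4 * π * ρ) / (alphaCoef α j.1 ^ 2 + ((j.2 : ℝ) * π / ρ) ^ 2 - k ^ 2) := by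
  have hnum := norm_cos_mul_sub_one_le_two ((j.2 : ℝ) * π)
    (norm_exp_I_mul_mul_ofReal_le_one (betaCoef_im_nonneg k α j.1) hρ)
  have hden : |k ^ 2 - alphaCoef α j.1 ^ 2 - ((j.2 : ℝ) * π / ρ) ^ 2| =
      alphaCoef α j.1 ^ 2 + ((j.2 : ℝ) * π / ρ) ^ 2 - k ^ 2 := by
    rw [abs_of_neg (by linarith)]
    ring
  rw [KhatRho, if_pos hj.ne, norm_div, norm_mul, Complex.norm_real, Complex.norm_real,
    Real.norm_eq_abs, Real.norm_eq_abs, hden, abs_of_nonneg (by positivity), one_div_mul_eq_div]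
  gcongr

lemma sq_div_two_sub_sq_le_alphaCoef_sq (α : ℝ) (m : ℤ) : (m : ℝ) ^ 2 / 2 - α ^ 2 ≤ alphaCoef α m ^ 2 := by
  unfold alphaCoef
  nlinarith [sq_nonneg ((m : ℝ) + 2 * α)]

lemma exists_pos_eventually_mul_le_denominator (k α : ℝ) {ρ : ℝ} (hρ : 0 < ρ) :
    ∃ c > 0, ∀ᶠ j : ℤ × ℤ in cofinite,
      c * (1 + (j.1 : ℝ) ^ 2 + (j.2 : ℝ) ^ 2) ≤
        alphaCoef α j.1 ^ 2 + ((j.2 : ℝ) * π / ρ) ^ 2 - k ^ 2 := by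
  set c₀ := min (1 / 2) ((π / ρ) ^ 2)
  have hc₀ : 0 < c₀ := lt_min (by norm_num) (by positivity)
  refine ⟨c₀ / 2, half_pos hc₀, ?_⟩
  filter_upwards [tendsto_intCast_sq_add_sq_cofinite.eventually_ge_atTop
    (1 + 2 * (α ^ 2 + k ^ 2) / c₀)] with j hj
  have h₁ : c₀ * (j.1 : ℝ) ^ 2 ≤ (j.1 : ℝ) ^ 2 / 2 := by
    nlinarith [min_le_left (1 / 2 : ℝ) ((π / ρ) ^ 2), sq_nonneg (j.1 : ℝ)]
  have h₂ : c₀ * (j.2 : ℝ) ^ 2 ≤ ((j.2 : ℝ) * π / ρ) ^ 2 := by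
    rw [mul_div_assoc, mul_pow, mul_comm]
    exact mul_le_mul_of_nonneg_left (min_le_right _ _) (sq_nonneg _)
  have h₃ : 2 * (α ^ 2 + k ^ 2) ≤ c₀ * ((j.1 : ℝ) ^ 2 + (j.2 : ℝ) ^ 2 - 1) := by
    have h := mul_le_mul_of_nonneg_left (le_sub_iff_add_le'.mpr hj) hc₀.le
    rwa [mul_div_cancel₀ _ hc₀.ne'] at h
  nlinarith [sq_div_two_sub_sq_le_alphaCoef_sq α j.1]

lemma mul_norm_KhatRho_le (k α : ℝ) {ρ c : ℝ} (hρ : 0 ≤ ρ) (hc : 0 < c) {j : ℤ × ℤ}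
    (hj : c * (1 + (j.1 : ℝ) ^ 2 + (j.2 : ℝ) ^ 2) ≤
      alphaCoef α j.1 ^ 2 + ((j.2 : ℝ) * π / ρ) ^ 2 - k ^ 2) :
    (1 + (j.1 : ℝ) ^ 2 + (j.2 : ℝ) ^ 2) * ‖KhatRho k α ρ j‖ ≤ 2 / Real.sqrt (4 * π * ρ) / c := by
  have hD := (mul_pos hc (by positivity)).trans_le hj
  have ha : 0 ≤ 2 / Real.sqrt (4 * π * ρ) := by positivity
  calc (1 + (j.1 : ℝ) ^ 2 + (j.2 : ℝ) ^ 2) * ‖KhatRho k α ρ j‖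
      ≤ (1 + (j.1 : ℝ) ^ 2 + (j.2 : ℝ) ^ 2) * (2 / Real.sqrt (4 * π * ρ) /
          (alphaCoef α j.1 ^ 2 + ((j.2 : ℝ) * π / ρ) ^ 2 - k ^ 2)) := by
        gcongr
        exact norm_KhatRho_le k α hρ (sub_pos.mp hD)
    _ ≤ 2 / Real.sqrt (4 * π * ρ) / c := by
        rw [mul_div_assoc', div_le_div_iff₀ hD hc]
        nlinarith [mul_le_mul_of_nonneg_left hj ha]

theorem KhatRho_decay_general (k α ρ : ℝ) (hρ : 0 < ρ) :
    ∃ C : ℝ, ∀ j : ℤ × ℤ,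
      (1 + (j.1 : ℝ) ^ 2 + (j.2 : ℝ) ^ 2) * ‖KhatRho k α ρ j‖ ≤ C := by
  obtain ⟨c, hc, hden⟩ := exists_pos_eventually_mul_le_denominator k α hρ
  have hbdd : IsBoundedUnder (· ≤ ·) cofinite
      (fun j : ℤ × ℤ => (1 + (j.1 : ℝ) ^ 2 + (j.2 : ℝ) ^ 2) * ‖KhatRho k α ρ j‖) :=
    ⟨_, eventually_map.mpr (hden.mono fun _ => mul_norm_KhatRho_le k α hρ.le hc)⟩
  obtain ⟨C, hC⟩ := hbdd.bddAbove_range_of_cofinite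
  exact ⟨C, fun j => hC ⟨j, rfl⟩⟩

/-- Decay of order `|j|⁻²` of the Fourier coefficients of the periodized
quasi-periodic Green's function (away from Wood's anomalies). -/
theorem KhatRho_decay (k α ρ : ℝ) (hk : 0 < k) (hρ : 0 < ρ)
    (hnr : ∀ j : ℤ, k ^ 2 ≠ (alphaCoef α j) ^ 2) :
    ∃ C : ℝ, ∀ j : ℤ × ℤ,
      (1 + (j.1 : ℝ) ^ 2 + (j.2 : ℝ) ^ 2) * ‖KhatRho k α ρ j‖ ≤ C :=
  KhatRho_decay_general k α ρ hρ
end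

section
/- Let α ∈ ℝ, R > 0, and let m : ℤ² → ℂ satisfy C₀ := sup_{j∈ℤ²} (1 + j₁² + j₂²)·|m(j)| < ∞. Then the linear map that sends a pair of sequences (a₁, a₂) ∈ ℓ²(ℤ²) × ℓ²(ℤ²) to the sequence j ↦ m(j)·( i(j₁ + α)·a₁(j) + i(j₂π/R)·a₂(j) ) is a well-defined bounded linear operator from ℓ²(ℤ²) × ℓ²(ℤ²) into H¹. -/
open Real

set_option maxHeartbeats 1000000 in
private lemma aux_pointwise (α p C₀ x y n1 n2 nm X : ℝ)
    (hn1 : 0 ≤ n1) (hn2 : 0 ≤ n2) (hnm : 0 ≤ nm)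
    (hmn : (1 + x ^ 2 + y ^ 2) * nm ≤ C₀) (hX0 : 0 ≤ X)
    (hX : X ≤ |x + α| * n1 + |y * p| * n2) :
    (1 + x ^ 2 + y ^ 2) * (nm * X) ^ 2
      ≤ 2 * (2 * (1 + α ^ 2) + p ^ 2) * (C₀ ^ 2 + 1) * (n1 ^ 2 + n2 ^ 2) := by
  set w : ℝ := 1 + x ^ 2 + y ^ 2 with hwdef
  have hw0 : 0 < w := by positivity
  set B : ℝ := 2 * (2 * (1 + α ^ 2) + p ^ 2) with hBdef
  have hB : 0 < B := by positivity
  have hX2 : X ^ 2 ≤ (|x + α| * n1 + |y * p| * n2) ^ 2 := by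
    have := mul_self_le_mul_self hX0 hX
    nlinarith
  have hexp : (|x + α| * n1 + |y * p| * n2) ^ 2
      ≤ 2 * ((x + α) ^ 2 * n1 ^ 2 + (y * p) ^ 2 * n2 ^ 2) := by
    nlinarith [sq_nonneg (|x + α| * n1 - |y * p| * n2), sq_abs (x + α), sq_abs (y * p)]
  have h1 : (x + α) ^ 2 ≤ 2 * (1 + α ^ 2) * w := by
    rw [hwdef]
    nlinarith [sq_nonneg (x - α), sq_nonneg y, sq_nonneg (α * x), sq_nonneg (α * y)]
  have h2 : (y * p) ^ 2 ≤ p ^ 2 * w := by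
    rw [hwdef]
    nlinarith [sq_nonneg x, sq_nonneg p, mul_nonneg (sq_nonneg p) (sq_nonneg x)]
  have hX3 : X ^ 2 ≤ B * w * (n1 ^ 2 + n2 ^ 2) := by
    have hb1 : (x + α) ^ 2 * n1 ^ 2 ≤ 2 * (1 + α ^ 2) * w * n1 ^ 2 :=
      mul_le_mul_of_nonneg_right h1 (sq_nonneg _)
    have hb2 : (y * p) ^ 2 * n2 ^ 2 ≤ p ^ 2 * w * n2 ^ 2 :=
      mul_le_mul_of_nonneg_right h2 (sq_nonneg _)
    have hα : 0 ≤ 2 * (1 + α ^ 2) := by positivity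
    rw [hBdef]
    nlinarith [mul_nonneg (mul_nonneg (sq_nonneg p) hw0.le) (sq_nonneg n1),
      mul_nonneg (mul_nonneg hα hw0.le) (sq_nonneg n2)]
  have h3 : (w * nm) * (w * nm) ≤ C₀ * C₀ :=
    mul_self_le_mul_self (by positivity) hmn
  have h4 : w * nm ^ 2 * X ^ 2 ≤ w * nm ^ 2 * (B * w * (n1 ^ 2 + n2 ^ 2)) :=
    mul_le_mul_of_nonneg_left hX3 (by positivity)
  have h5 : B * (n1 ^ 2 + n2 ^ 2) * ((w * nm) * (w * nm))
      ≤ B * (n1 ^ 2 + n2 ^ 2) * (C₀ * C₀) :=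
    mul_le_mul_of_nonneg_left h3 (by positivity)
  have hS : 0 ≤ n1 ^ 2 + n2 ^ 2 := by positivity
  calc w * (nm * X) ^ 2 = w * nm ^ 2 * X ^ 2 := by ring
    _ ≤ w * nm ^ 2 * (B * w * (n1 ^ 2 + n2 ^ 2)) := h4
    _ = B * (n1 ^ 2 + n2 ^ 2) * ((w * nm) * (w * nm)) := by ring
    _ ≤ B * (n1 ^ 2 + n2 ^ 2) * (C₀ * C₀) := h5
    _ ≤ B * (C₀ ^ 2 + 1) * (n1 ^ 2 + n2 ^ 2) := by nlinarith [mul_nonneg hB.le hS]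

/-- Fourier-side form of the periodized potential `L_per`: a Fourier multiplier whose
symbol decays like `|j|⁻²` composed with first-order derivatives maps `ℓ² × ℓ²`
boundedly into the Fourier realization `H¹` of `H¹_per`. -/
theorem multiplier_bounded_into_H1 (α R : ℝ) (hR : 0 < R) (m : ℤ × ℤ → ℂ) (C₀ : ℝ)
    (hm : ∀ j : ℤ × ℤ, (1 + (j.1 : ℝ) ^ 2 + (j.2 : ℝ) ^ 2) * ‖m j‖ ≤ C₀) :
    ∃ C : ℝ, 0 < C ∧ ∀ a₁ a₂ : ℤ × ℤ → ℂ,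
      Summable (fun j : ℤ × ℤ => ‖a₁ j‖ ^ 2) →
      Summable (fun j : ℤ × ℤ => ‖a₂ j‖ ^ 2) →
      Summable (fun j : ℤ × ℤ => (1 + (j.1 : ℝ) ^ 2 + (j.2 : ℝ) ^ 2) *
          ‖m j * (Complex.I * (((j.1 : ℝ) + α : ℝ) : ℂ) * a₁ j
            + Complex.I * ((((j.2 : ℝ) * π / R) : ℝ) : ℂ) * a₂ j)‖ ^ 2) ∧
      Real.sqrt (∑' j : ℤ × ℤ, (1 + (j.1 : ℝ) ^ 2 + (j.2 : ℝ) ^ 2) *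
          ‖m j * (Complex.I * (((j.1 : ℝ) + α : ℝ) : ℂ) * a₁ j
            + Complex.I * ((((j.2 : ℝ) * π / R) : ℝ) : ℂ) * a₂ j)‖ ^ 2)
        ≤ C * Real.sqrt ((∑' j : ℤ × ℤ, ‖a₁ j‖ ^ 2) + (∑' j : ℤ × ℤ, ‖a₂ j‖ ^ 2)) := by
  set K : ℝ := 2 * (2 * (1 + α ^ 2) + (π / R) ^ 2) * (C₀ ^ 2 + 1) with hKdef
  have hπ : 0 < π := Real.pi_pos
  have hK : 0 < K := by positivity
  refine ⟨Real.sqrt K, Real.sqrt_pos.mpr hK, ?_⟩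
  intro a₁ a₂ h₁ h₂
  have key : ∀ j : ℤ × ℤ,
      (1 + (j.1 : ℝ) ^ 2 + (j.2 : ℝ) ^ 2) *
          ‖m j * (Complex.I * (((j.1 : ℝ) + α : ℝ) : ℂ) * a₁ j
            + Complex.I * ((((j.2 : ℝ) * π / R) : ℝ) : ℂ) * a₂ j)‖ ^ 2
        ≤ K * (‖a₁ j‖ ^ 2 + ‖a₂ j‖ ^ 2) := by
    intro j
    rw [norm_mul]
    have hX : ‖Complex.I * (((j.1 : ℝ) + α : ℝ) : ℂ) * a₁ j
            + Complex.I * ((((j.2 : ℝ) * π / R) : ℝ) : ℂ) * a₂ j‖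
        ≤ |(j.1 : ℝ) + α| * ‖a₁ j‖ + |(j.2 : ℝ) * (π / R)| * ‖a₂ j‖ := by
      refine (norm_add_le _ _).trans (le_of_eq ?_)
      rw [norm_mul, norm_mul, norm_mul, norm_mul, Complex.norm_I, one_mul, one_mul,
        Complex.norm_real, Complex.norm_real, Real.norm_eq_abs, Real.norm_eq_abs]
      ring_nf
    exact aux_pointwise α (π / R) C₀ (j.1 : ℝ) (j.2 : ℝ) ‖a₁ j‖ ‖a₂ j‖ ‖m j‖ _
      (norm_nonneg _) (norm_nonneg _) (norm_nonneg _) (hm j) (norm_nonneg _) hX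
  have hsumMaj : Summable (fun j : ℤ × ℤ => K * (‖a₁ j‖ ^ 2 + ‖a₂ j‖ ^ 2)) :=
    (h₁.add h₂).mul_left K
  have hsum : Summable (fun j : ℤ × ℤ => (1 + (j.1 : ℝ) ^ 2 + (j.2 : ℝ) ^ 2) *
      ‖m j * (Complex.I * (((j.1 : ℝ) + α : ℝ) : ℂ) * a₁ j
        + Complex.I * ((((j.2 : ℝ) * π / R) : ℝ) : ℂ) * a₂ j)‖ ^ 2) := by
    refine Summable.of_nonneg_of_le (fun j => ?_) key hsumMaj
    have h0 : (0:ℝ) ≤ 1 + (j.1 : ℝ) ^ 2 + (j.2 : ℝ) ^ 2 := by positivity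
    positivity
  refine ⟨hsum, ?_⟩
  have htsum : (∑' j : ℤ × ℤ, (1 + (j.1 : ℝ) ^ 2 + (j.2 : ℝ) ^ 2) *
      ‖m j * (Complex.I * (((j.1 : ℝ) + α : ℝ) : ℂ) * a₁ j
        + Complex.I * ((((j.2 : ℝ) * π / R) : ℝ) : ℂ) * a₂ j)‖ ^ 2)
      ≤ K * ((∑' j : ℤ × ℤ, ‖a₁ j‖ ^ 2) + (∑' j : ℤ × ℤ, ‖a₂ j‖ ^ 2)) := by
    have h := Summable.tsum_le_tsum key hsum hsumMaj
    rw [tsum_mul_left, Summable.tsum_add h₁ h₂] at h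
    exact h
  calc Real.sqrt _ ≤ Real.sqrt (K * ((∑' j : ℤ × ℤ, ‖a₁ j‖ ^ 2) +
        (∑' j : ℤ × ℤ, ‖a₂ j‖ ^ 2))) := Real.sqrt_le_sqrt htsum
    _ = Real.sqrt K * Real.sqrt ((∑' j : ℤ × ℤ, ‖a₁ j‖ ^ 2) +
        (∑' j : ℤ × ℤ, ‖a₂ j‖ ^ 2)) := Real.sqrt_mul hK.le _
end
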